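/- arXiv:1409.5397 — 7 statements merged into one kernel-verified Lean document; each statement's English description precedes it below -/
import Mathlib

section
/- Let D be a set, μ a positive measure on D, p ∈ (0,∞), and f a bounded measurable function on D with ‖f‖_{L^∞(D,μ)} ≤ M·‖f‖_{L^p(D,μ)}. Then for every q with 0 < q ≤ p and every r ≥ q, one has ‖f‖_{L^r(D,μ)} ≤ M^{(1/q − 1/r)p}·‖f‖_{L^q(D,μ)}. -/
/-!
Integrating the pointwise bound `|f|^r ≤ ‖f‖_∞^{r-q} |f|^q` gives, for `q ≤ r`, the interpolation
inequality `‖f‖_r ≤ ‖f‖_∞^{1-q/r} ‖f‖_q^{q/r}`. At `r = p`, combined with the hypothesis, it gives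
`‖f‖_∞ ≤ M ‖f‖_∞^{1-q/p} ‖f‖_q^{q/p}`; cancelling the finite factor yields `‖f‖_∞ ≤ M^{p/q} ‖f‖_q`.
Feeding this back into the interpolation inequality at `r` gives the claim.
-/

open MeasureTheory ENNReal

namespace ENNReal

lemma le_rpow_inv_mul_of_le_mul_rpow_one_sub_mul_rpow {a b c : ℝ≥0∞} {θ : ℝ}
    (hθ₀ : 0 < θ) (hθ₁ : θ ≤ 1) (ha : a ≠ ∞) (h : a ≤ c * (a ^ (1 - θ) * b ^ θ)) :
    a ≤ c ^ θ⁻¹ * b := by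
  rcases eq_or_ne a 0 with rfl | ha₀
  · exact zero_le
  have hcancel : a ^ θ ≤ c * b ^ θ := by
    rw [← ENNReal.mul_le_mul_iff_left (rpow_pos (pos_iff_ne_zero.2 ha₀) ha).ne'
      (rpow_ne_top_of_ne_zero ha₀ ha)]
    calc a ^ θ * a ^ (1 - θ) = a := by
          rw [← rpow_add_of_nonneg _ _ hθ₀.le (by linarith), add_sub_cancel, rpow_one]
      _ ≤ c * (a ^ (1 - θ) * b ^ θ) := h
      _ = c * b ^ θ * a ^ (1 - θ) := by ring
  calc a = (a ^ θ) ^ θ⁻¹ := (rpow_rpow_inv hθ₀.ne' a).symm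
    _ ≤ (c * b ^ θ) ^ θ⁻¹ := rpow_le_rpow hcancel (inv_nonneg.mpr hθ₀.le)
    _ = c ^ θ⁻¹ * b := by
        rw [mul_rpow_of_nonneg _ _ (inv_nonneg.mpr hθ₀.le), rpow_rpow_inv hθ₀.ne']

lemma rpow_one_sub_mul_rpow_le {a b c : ℝ≥0∞} {θ : ℝ} (hθ₀ : 0 ≤ θ) (hθ₁ : θ ≤ 1)
    (h : a ≤ c * b) : a ^ (1 - θ) * b ^ θ ≤ c ^ (1 - θ) * b := by
  calc a ^ (1 - θ) * b ^ θ ≤ (c * b) ^ (1 - θ) * b ^ θ := by gcongr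
    _ = c ^ (1 - θ) * b := by
        rw [mul_rpow_of_nonneg _ _ (by linarith), mul_assoc,
          ← rpow_add_of_nonneg _ _ (by linarith) hθ₀, sub_add_cancel, rpow_one]

end ENNReal

namespace MeasureTheory

variable {α E : Type*} [MeasurableSpace α] [NormedAddCommGroup E] {μ : Measure α}

lemma eLpNorm_le_eLpNorm_top_rpow_mul_eLpNorm_rpow {f : α → E} (hf : eLpNorm f ∞ μ ≠ ∞)
    {q r : ℝ} (hq : 0 < q) (hqr : q ≤ r) :
    eLpNorm f (.ofReal r) μ
      ≤ eLpNorm f ∞ μ ^ (1 - q / r) * eLpNorm f (.ofReal q) μ ^ (q / r) := by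
  have hr : 0 < r := hq.trans_le hqr
  rw [eLpNorm_eq_lintegral_rpow_enorm_toReal (ofReal_pos.mpr hr).ne' ofReal_ne_top,
    eLpNorm_eq_lintegral_rpow_enorm_toReal (ofReal_pos.mpr hq).ne' ofReal_ne_top,
    toReal_ofReal hr.le, toReal_ofReal hq.le]
  rw [eLpNorm_exponent_top] at hf ⊢
  set A := eLpNormEssSup f μ
  have hintegral : ∫⁻ x, ‖f x‖ₑ ^ r ∂μ ≤ A ^ (r - q) * ∫⁻ x, ‖f x‖ₑ ^ q ∂μ := by
    rw [← lintegral_const_mul' _ _ (rpow_ne_top_of_nonneg (by linarith) hf)]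
    refine lintegral_mono_ae ?_
    filter_upwards [enorm_ae_le_eLpNormEssSup f μ] with x hx
    calc ‖f x‖ₑ ^ r = ‖f x‖ₑ ^ (r - q) * ‖f x‖ₑ ^ q := by
          rw [← rpow_add_of_nonneg _ _ (by linarith) hq.le, sub_add_cancel]
      _ ≤ A ^ (r - q) * ‖f x‖ₑ ^ q := by gcongr
  calc (∫⁻ x, ‖f x‖ₑ ^ r ∂μ) ^ (1 / r)
      ≤ (A ^ (r - q) * ∫⁻ x, ‖f x‖ₑ ^ q ∂μ) ^ (1 / r) := by gcongr
    _ = A ^ (1 - q / r) * ((∫⁻ x, ‖f x‖ₑ ^ q ∂μ) ^ (1 / q)) ^ (q / r) := by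
        rw [mul_rpow_of_nonneg _ _ (by positivity), ← rpow_mul, ← rpow_mul]
        congr 2 <;> field_simp

lemma eLpNorm_top_le_rpow_mul_eLpNorm {f : α → E} (hf : eLpNorm f ∞ μ ≠ ∞) {p q : ℝ} {M : ℝ≥0∞}
    (hp : 0 < p) (h : eLpNorm f ∞ μ ≤ M * eLpNorm f (.ofReal p) μ) (hq : 0 < q) (hqp : q ≤ p) :
    eLpNorm f ∞ μ ≤ M ^ (p / q) * eLpNorm f (.ofReal q) μ := by
  have hθ : (q / p)⁻¹ = p / q := inv_div q p
  rw [← hθ]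
  refine le_rpow_inv_mul_of_le_mul_rpow_one_sub_mul_rpow (by positivity)
    ((div_le_one hp).mpr hqp) hf (h.trans ?_)
  gcongr
  exact eLpNorm_le_eLpNorm_top_rpow_mul_eLpNorm_rpow hf hq hqp

end MeasureTheory

theorem stmt1_general {α : Type*} [MeasurableSpace α] (μ : Measure α) (f : α → ℝ)
    (hbd : eLpNorm f ∞ μ ≠ ∞)
    (p : ℝ) (hp : 0 < p) (M : ℝ≥0∞)
    (h : eLpNorm f ∞ μ ≤ M * eLpNorm f (ENNReal.ofReal p) μ) :
    ∀ q r : ℝ, 0 < q → q ≤ p → q ≤ r →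
      eLpNorm f (ENNReal.ofReal r) μ
        ≤ M ^ ((1 / q - 1 / r) * p) * eLpNorm f (ENNReal.ofReal q) μ := by
  intro q r hq hqp hqr
  have hr : 0 < r := hq.trans_le hqr
  calc eLpNorm f (.ofReal r) μ
      ≤ eLpNorm f ∞ μ ^ (1 - q / r) * eLpNorm f (.ofReal q) μ ^ (q / r) :=
        eLpNorm_le_eLpNorm_top_rpow_mul_eLpNorm_rpow hbd hq hqr
    _ ≤ (M ^ (p / q)) ^ (1 - q / r) * eLpNorm f (.ofReal q) μ :=
        rpow_one_sub_mul_rpow_le (by positivity) ((div_le_one hr).mpr hqr)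
          (eLpNorm_top_le_rpow_mul_eLpNorm hbd hp h hq hqp)
    _ = M ^ ((1 / q - 1 / r) * p) * eLpNorm f (.ofReal q) μ := by
        rw [← rpow_mul]
        congr 2
        field_simp

/-- If `‖f‖_{L^∞(μ)} ≤ M ‖f‖_{L^p(μ)}` for some `0 < p < ∞` and a bounded
measurable `f`, then for every `0 < q ≤ p` and every `r ≥ q`,
`‖f‖_{L^r(μ)} ≤ M^{(1/q - 1/r)p} ‖f‖_{L^q(μ)}`. -/
theorem stmt1 {α : Type*} [MeasurableSpace α] (μ : Measure α) (f : α → ℝ)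
    (hf : Measurable f) (hbd : eLpNorm f ∞ μ ≠ ∞)
    (p : ℝ) (hp : 0 < p) (M : ℝ≥0∞)
    (h : eLpNorm f ∞ μ ≤ M * eLpNorm f (ENNReal.ofReal p) μ) :
    ∀ q r : ℝ, 0 < q → q ≤ p → q ≤ r →
      eLpNorm f (ENNReal.ofReal r) μ
        ≤ M ^ ((1 / q - 1 / r) * p) * eLpNorm f (ENNReal.ofReal q) μ :=
  stmt1_general μ f hbd p hp M h
end

section
/- For all real a ≥ 0, b ∈ ℝ, and p ∈ [1,2], the inequality |a + b|^p − a^p − p·a^{p−1}·b ≤ 13·|b|^p holds. -/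
/-!
If `a + b ≤ 0`, then both `a` and `|a + b|` are at most `|b|`, and each term is bounded crudely
by a multiple of `|b| ^ p`. If `a + b > 0`, the tangent line of the convex function `t ↦ t ^ p`
at `a + b` gives `a ^ p ≥ (a + b) ^ p - p (a + b) ^ (p - 1) b`, so the left-hand side is at most
`p b ((a + b) ^ (p - 1) - a ^ (p - 1))`, which the `(p - 1)`-Hölder continuity of
`t ↦ t ^ (p - 1)` bounds by `p |b| ^ p`.
-/

namespace Real

lemma rpow_sub_one_mul_self {x p : ℝ} (hx : 0 ≤ x) (hp : p ≠ 0) : x ^ (p - 1) * x = x ^ p := by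
  rw [← rpow_add_one' hx (by simpa using hp), sub_add_cancel]

lemma rpow_sub_rpow_le_abs_sub_rpow {x y q : ℝ} (hx : 0 ≤ x) (hy : 0 ≤ y) (hq₀ : 0 ≤ q)
    (hq₁ : q ≤ 1) : x ^ q - y ^ q ≤ |x - y| ^ q := by
  have hxy : x ≤ y + |x - y| := by linarith [le_abs_self (x - y)]
  have hsub := rpow_add_le_add_rpow hy (abs_nonneg (x - y)) hq₀ hq₁
  linarith [rpow_le_rpow hx hxy hq₀]

lemma abs_rpow_sub_rpow_le {x y q : ℝ} (hx : 0 ≤ x) (hy : 0 ≤ y) (hq₀ : 0 ≤ q) (hq₁ : q ≤ 1) :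
    |x ^ q - y ^ q| ≤ |x - y| ^ q := by
  rw [abs_sub_le_iff]
  exact ⟨rpow_sub_rpow_le_abs_sub_rpow hx hy hq₀ hq₁,
    abs_sub_comm x y ▸ rpow_sub_rpow_le_abs_sub_rpow hy hx hq₀ hq₁⟩

lemma rpow_add_mul_sub_le_rpow {x y p : ℝ} (hx : 0 < x) (hy : 0 ≤ y) (hp : 1 ≤ p) :
    x ^ p + p * x ^ (p - 1) * (y - x) ≤ y ^ p := by
  have hbern := one_add_mul_self_le_rpow_one_add (s := y / x - 1)
    (by linarith [div_nonneg hy hx.le]) hp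
  rw [add_sub_cancel, div_rpow hy hx.le, le_div_iff₀ (rpow_pos_of_pos hx p)] at hbern
  rw [← rpow_sub_one_mul_self hx.le (by linarith : p ≠ 0)] at hbern ⊢
  refine (le_of_eq ?_).trans hbern
  field_simp

end Real

open Real

lemma abs_add_rpow_sub_le_of_add_nonpos {a b p : ℝ} (ha : 0 ≤ a) (hab : a + b ≤ 0)
    (hp : 1 ≤ p) :
    |a + b| ^ p - a ^ p - p * a ^ (p - 1) * b ≤ (1 + p) * |b| ^ p := by
  have hb : |b| = -b := abs_of_nonpos (by linarith)
  have hab_le : |a + b| ^ p ≤ |b| ^ p :=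
    rpow_le_rpow (abs_nonneg _) (by rw [abs_of_nonpos hab, hb]; linarith) (by linarith)
  have ha_le : a ^ (p - 1) * |b| ≤ |b| ^ p := by
    rw [← rpow_sub_one_mul_self (abs_nonneg b) (by linarith : p ≠ 0)]
    gcongr
    linarith
  have hlin : -(p * a ^ (p - 1) * b) = p * (a ^ (p - 1) * |b|) := by rw [hb]; ring
  calc |a + b| ^ p - a ^ p - p * a ^ (p - 1) * b
      ≤ |b| ^ p + p * (a ^ (p - 1) * |b|) := by linarith [rpow_nonneg ha p]
    _ ≤ |b| ^ p + p * |b| ^ p := by gcongr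
    _ = (1 + p) * |b| ^ p := by ring

lemma abs_add_rpow_sub_le_of_add_pos {a b p : ℝ} (ha : 0 ≤ a) (hab : 0 < a + b)
    (hp₁ : 1 ≤ p) (hp₂ : p ≤ 2) :
    |a + b| ^ p - a ^ p - p * a ^ (p - 1) * b ≤ p * |b| ^ p := by
  have htangent := rpow_add_mul_sub_le_rpow hab ha hp₁
  have hholder : b * ((a + b) ^ (p - 1) - a ^ (p - 1)) ≤ |b| ^ p :=
    calc b * ((a + b) ^ (p - 1) - a ^ (p - 1))
        ≤ |b| * |(a + b) ^ (p - 1) - a ^ (p - 1)| := by rw [← abs_mul]; exact le_abs_self _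
      _ ≤ |b| * |b| ^ (p - 1) := by
          gcongr
          simpa using abs_rpow_sub_rpow_le hab.le ha (by linarith) (by linarith)
      _ = |b| ^ p := by rw [mul_comm, rpow_sub_one_mul_self (abs_nonneg b) (by linarith)]
  rw [abs_of_pos hab]
  calc (a + b) ^ p - a ^ p - p * a ^ (p - 1) * b
      ≤ p * (b * ((a + b) ^ (p - 1) - a ^ (p - 1))) := by linarith
    _ ≤ p * |b| ^ p := by gcongr

/-- For all `a ≥ 0`, `b ∈ ℝ`, `1 ≤ p ≤ 2`:
`|a+b|^p - a^p - p·a^{p-1}·b ≤ 13·|b|^p` (real powers). -/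
theorem stmt9 (a b p : ℝ) (ha : 0 ≤ a) (hp1 : 1 ≤ p) (hp2 : p ≤ 2) :
    |a + b| ^ p - a ^ p - p * a ^ (p - 1) * b ≤ 13 * |b| ^ p := by
  have hbp := rpow_nonneg (abs_nonneg b) p
  rcases le_or_gt (a + b) 0 with hab | hab
  · have := abs_add_rpow_sub_le_of_add_nonpos ha hab hp1
    nlinarith
  · have := abs_add_rpow_sub_le_of_add_pos ha hab hp1 hp2
    nlinarith
end

section
/- Fix an integer n ≥ 1 and let P be a real polynomial of degree at most n on ℝ with P(1 + n^{−2}/3) = 1. Then sup_{x ∈ [−1,1]} |P(x)| ≥ 1/2. -/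
/-!
By the extremal property of Chebyshev polynomials, a polynomial of degree at most `n` bounded
by `M` on `[-1, 1]` satisfies `P x ≤ M * T_n x` for every `x ≥ 1`. Writing `1 + δ = cosh t`,
we have `T_n (1 + δ) = cosh (n t) ≤ exp (n² t² / 2) ≤ exp (n² δ)`, which for `δ = 1 / (3 n²)`
is `exp (1 / 3) < 2`; hence `1 = P (1 + δ) ≤ 2 M`.
-/

open Polynomial Real

theorem Real.one_add_sq_div_two_le_cosh (t : ℝ) : 1 + t ^ 2 / 2 ≤ cosh t := by
  have hsinh : |t| / 2 ≤ sinh (|t| / 2) := self_le_sinh_iff.mpr (by positivity)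
  have hcosh : cosh t = 1 + 2 * sinh (|t| / 2) ^ 2 := by
    have h := cosh_two_mul (|t| / 2)
    rw [mul_div_cancel₀ _ two_ne_zero, cosh_abs, cosh_sq'] at h
    rw [h]
    ring
  rw [hcosh, ← sq_abs t]
  nlinarith [abs_nonneg t]

namespace Polynomial.Chebyshev

theorem eval_T_real_one_add_le_exp (n : ℕ) {δ : ℝ} (hδ : 0 ≤ δ) :
    (T ℝ n).eval (1 + δ) ≤ exp (n ^ 2 * δ) := by
  set t := arcosh (1 + δ)
  have ht : cosh t = 1 + δ := cosh_arcosh (by linarith)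
  calc (T ℝ n).eval (1 + δ) = cosh (n * t) := by rw [← ht]; exact_mod_cast T_real_cosh t n
    _ ≤ exp ((n * t) ^ 2 / 2) := cosh_le_exp_half_sq _
    _ ≤ exp (n ^ 2 * δ) := by
      gcongr exp ?_
      nlinarith [one_add_sq_div_two_le_cosh t, sq_nonneg (n : ℝ)]

theorem eval_T_real_one_add_inv_sq_div_three_le_two (n : ℕ) :
    (T ℝ n).eval (1 + ((n : ℝ) ^ 2)⁻¹ / 3) ≤ 2 := calc
  _ ≤ exp (n ^ 2 * (((n : ℝ) ^ 2)⁻¹ / 3)) := eval_T_real_one_add_le_exp n (by positivity)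
  _ ≤ exp (log 2) := by
    gcongr
    rw [← mul_div_assoc]
    have h_third : (n : ℝ) ^ 2 * ((n : ℝ) ^ 2)⁻¹ / 3 ≤ 1 / 3 :=
      div_le_div_of_nonneg_right mul_inv_le_one (by norm_num)
    linarith [log_two_gt_d9]
  _ = 2 := exp_log two_pos

theorem eval_le_mul_eval_T_real {n : ℕ} {P : ℝ[X]} {c x : ℝ} (hc : 0 < c) (hx : 1 ≤ x)
    (hdeg : P.natDegree ≤ n) (hbnd : ∀ y ∈ Set.Icc (-1) 1, |P.eval y| ≤ c) :
    P.eval x ≤ c * (T ℝ n).eval x := by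
  have hQ : ∀ y ∈ Set.Icc (-1) 1, |(c⁻¹ • P).eval y| ≤ 1 := fun y hy => by
    rw [eval_smul, smul_eq_mul, abs_mul, abs_of_pos (inv_pos.mpr hc), inv_mul_le_iff₀ hc, mul_one]
    exact hbnd y hy
  have := eval_iterate_derivative_le_of_forall_abs_le_one (k := 0) hx
    ((degree_smul_le _ _).trans (degree_le_of_natDegree_le hdeg)) hQ
  rwa [Function.iterate_zero, id, id, eval_smul, smul_eq_mul, inv_mul_le_iff₀ hc] at this

end Polynomial.Chebyshev

theorem stmt10_general (n : ℕ) (P : Polynomial ℝ) (hdeg : P.natDegree ≤ n)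
    (hval : P.eval (1 + ((n : ℝ) ^ 2)⁻¹ / 3) = 1) :
    (1 : ℝ) / 2 ≤ sSup ((fun x => |P.eval x|) '' Set.Icc (-1 : ℝ) 1) := by
  set M := sSup ((fun x => |P.eval x|) '' Set.Icc (-1 : ℝ) 1)
  have hM : ∀ y ∈ Set.Icc (-1 : ℝ) 1, |P.eval y| ≤ M := fun y hy =>
    le_csSup (isCompact_Icc.image P.continuous.abs).bddAbove ⟨y, hy, rfl⟩
  have hM0 : 0 ≤ M := (abs_nonneg _).trans (hM 0 (by norm_num))
  refine le_of_forall_pos_le_add fun ε hε => ?_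
  have hP := Chebyshev.eval_le_mul_eval_T_real (x := 1 + ((n : ℝ) ^ 2)⁻¹ / 3)
    (add_pos_of_nonneg_of_pos hM0 hε) (le_add_of_nonneg_right (by positivity)) hdeg
    fun y hy => (hM y hy).trans (le_add_of_nonneg_right hε.le)
  have hT := Chebyshev.eval_T_real_one_add_inv_sq_div_three_le_two n
  rw [hval] at hP
  nlinarith

/-- If `P` is a real polynomial of degree at most `n` (`n ≥ 1`) with
`P(1 + n^{-2}/3) = 1`, then `sup_{x ∈ [-1,1]} |P(x)| ≥ 1/2`. -/
theorem stmt10 (n : ℕ) (hn : 1 ≤ n) (P : Polynomial ℝ) (hdeg : P.natDegree ≤ n)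
    (hval : P.eval (1 + ((n : ℝ) ^ 2)⁻¹ / 3) = 1) :
    (1 : ℝ) / 2 ≤ sSup ((fun x => |P.eval x|) '' Set.Icc (-1 : ℝ) 1) :=
  stmt10_general n P hdeg hval
end

section
/- Let ρ_n(x) = n^{−2} + n^{−1}√(1 − x²) for x ∈ [−1,1]. For any integers n, m ≥ 1 and any y ∈ [−1,1], there exists a real polynomial P of degree at most n such that P(y) = 1 and |P(x)| ≤ c₁·(ρ_n(y)/(ρ_n(y) + |x − y|))^m for all x ∈ [−1,1], where c₁ > 0 depends only on m. -/
/-!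
Put `θ = arccos y` and let `cos θ₀` be a zero of the Chebyshev polynomial `T_k` with
`|θ - θ₀| ≤ π / (2k)`. Writing `cos φ - cos θ₀` and `cos (kφ) - cos (kθ₀)` as products of sines,
the quotient `S = T_k / (X - cos θ₀)` satisfies
`S(cos φ) sin ((φ + θ₀)/2) sin ((φ - θ₀)/2) = sin (k(φ + θ₀)/2) sin (k(φ - θ₀)/2)`,
so `|S(cos φ)| |sin ((φ + θ₀)/2)|` is at most `k` everywhere and at least `k/4` near `θ₀`.
Together with `k ρ_k(y) ≍ sin θ₀` this gives `|S(x)| / |S(y)| ≲ ρ_k(y) / (ρ_k(y) + |x - y|)`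
for `S` of degree `k - 1`. Taking `k = ⌊n/m⌋ + 1`, the `m`-th power of `S / S(y)` has degree
at most `n`, and `ρ_k ≤ m² ρ_n`.
-/

open Real Polynomial Set

theorem abs_sin_nat_mul_le (k : ℕ) (t : ℝ) : |sin (k * t)| ≤ k * |sin t| := by
  induction k with
  | zero => simp
  | succ k ih =>
    calc |sin (((k + 1 : ℕ) : ℝ) * t)| = |sin (k * t) * cos t + cos (k * t) * sin t| := by
          push_cast; rw [add_mul, one_mul, sin_add]
      _ ≤ |sin (k * t)| * |cos t| + |cos (k * t)| * |sin t| := by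
          simpa only [abs_mul] using abs_add_le (sin (k * t) * cos t) (cos (k * t) * sin t)
      _ ≤ k * |sin t| * 1 + 1 * |sin t| := by
          gcongr
          exacts [abs_cos_le_one _, abs_cos_le_one _]
      _ = ((k + 1 : ℕ) : ℝ) * |sin t| := by push_cast; ring

theorem abs_div_two_le_abs_sin {t : ℝ} (ht : |t| ≤ π / 2) : |t| / 2 ≤ |sin t| := by
  have h : 1 / 2 ≤ 2 / π := by
    rw [div_le_div_iff₀ two_pos pi_pos]; linarith [pi_le_four]
  nlinarith [mul_abs_le_abs_sin ht, abs_nonneg t]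

theorem sin_div_two_le_sin_add_div_two {a φ : ℝ} (ha : a ∈ Icc 0 π) (hφ : φ ∈ Icc 0 π) :
    sin a / 2 ≤ sin ((φ + a) / 2) := by
  have hsa : 0 ≤ sin (a / 2) :=
    sin_nonneg_of_nonneg_of_le_pi (by linarith [ha.1]) (by linarith [ha.2, pi_pos])
  have hca : 0 ≤ cos (a / 2) :=
    cos_nonneg_of_mem_Icc ⟨by linarith [ha.1, pi_pos], by linarith [ha.2]⟩
  have hcφ : 0 ≤ cos (φ / 2) :=
    cos_nonneg_of_mem_Icc ⟨by linarith [hφ.1, pi_pos], by linarith [hφ.2]⟩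
  have hsφ : 0 ≤ sin (φ / 2) :=
    sin_nonneg_of_nonneg_of_le_pi (by linarith [hφ.1]) (by linarith [hφ.2, pi_pos])
  have hsum : 1 ≤ cos (φ / 2) + sin (φ / 2) := by nlinarith [sin_sq_add_cos_sq (φ / 2)]
  rw [show a = 2 * (a / 2) by ring, sin_two_mul,
    show (φ + 2 * (a / 2)) / 2 = φ / 2 + a / 2 by ring, sin_add]
  -- each of `sin (a/2)`, `cos (a/2)` dominates their product, and `cos (φ/2) + sin (φ/2) ≥ 1`
  have h1 := mul_nonneg (mul_nonneg (sub_nonneg.mpr (cos_le_one (a / 2))) hsa) hcφ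
  have h2 := mul_nonneg (mul_nonneg (sub_nonneg.mpr (sin_le_one (a / 2))) hca) hsφ
  have h3 := mul_nonneg (mul_nonneg hsa hca) (sub_nonneg.mpr hsum)
  linarith

theorem inv_le_sin_of_mem_Icc {k : ℕ} (hk : 1 ≤ k) {θ₀ : ℝ}
    (hθ₀ : θ₀ ∈ Icc (π / (2 * k)) (π - π / (2 * k))) : (k : ℝ)⁻¹ ≤ sin θ₀ := by
  have hk' : (0 : ℝ) < k := by exact_mod_cast hk
  have hjordan : 2 / π * (π / (2 * k)) = (k : ℝ)⁻¹ := by field_simp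
  have hpos : 0 ≤ π / (2 * k) := by positivity
  rw [← hjordan]
  rcases le_total θ₀ (π / 2) with h | h
  · calc 2 / π * (π / (2 * k)) ≤ 2 / π * θ₀ := by gcongr; exact hθ₀.1
      _ ≤ sin θ₀ := mul_le_sin (by linarith [hθ₀.1]) h
  · calc 2 / π * (π / (2 * k)) ≤ 2 / π * (π - θ₀) := by gcongr; linarith [hθ₀.2]
      _ ≤ sin (π - θ₀) := mul_le_sin (by linarith [hθ₀.2]) (by linarith)
      _ = sin θ₀ := sin_pi_sub θ₀

theorem pi_div_two_mul_le_two_mul_inv (k : ℕ) : π / (2 * k) ≤ 2 * (k : ℝ)⁻¹ := by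
  calc π / (2 * k) = π / 4 * (2 * (k : ℝ)⁻¹) := by ring
    _ ≤ 1 * (2 * (k : ℝ)⁻¹) := by gcongr; linarith [pi_le_four]
    _ = 2 * (k : ℝ)⁻¹ := one_mul _

theorem exists_nat_abs_sub_half_le {k : ℕ} (hk : 1 ≤ k) {t : ℝ} (ht : t ∈ Icc 0 (k : ℝ)) :
    ∃ i : ℕ, 1 ≤ i ∧ i ≤ k ∧ |t - (i - 1 / 2)| ≤ 1 / 2 := by
  rcases ht.1.eq_or_lt with rfl | hpos
  · exact ⟨1, le_rfl, hk, by norm_num⟩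
  · refine ⟨⌈t⌉₊, Nat.ceil_pos.mpr hpos, Nat.ceil_le.mpr ht.2, abs_le.mpr ⟨?_, ?_⟩⟩
    · linarith [Nat.ceil_lt_add_one ht.1]
    · linarith [Nat.le_ceil t]

theorem exists_cos_mul_eq_zero_near {k : ℕ} (hk : 1 ≤ k) {θ : ℝ} (hθ : θ ∈ Icc 0 π) :
    ∃ θ₀, cos (k * θ₀) = 0 ∧ θ₀ ∈ Icc (π / (2 * k)) (π - π / (2 * k)) ∧
      |θ - θ₀| ≤ π / (2 * k) := by
  have hk' : (0 : ℝ) < k := by exact_mod_cast hk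
  obtain ⟨i, hi1, hik, hi⟩ := exists_nat_abs_sub_half_le hk (t := k * θ / π)
    ⟨by have := hθ.1; positivity, by rw [div_le_iff₀ pi_pos]; nlinarith [hθ.2]⟩
  have hi1' : (1 : ℝ) ≤ i := by exact_mod_cast hi1
  have hik' : (i : ℝ) ≤ k := by exact_mod_cast hik
  refine ⟨(i - 1 / 2) * π / k, ?_, ⟨?_, ?_⟩, ?_⟩
  · rw [mul_div_cancel₀ _ hk'.ne', show (i - 1 / 2 : ℝ) * π = i * π - π / 2 by ring,
      cos_sub_pi_div_two, sin_nat_mul_pi]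
  · rw [div_le_div_iff₀ (by positivity) hk']
    nlinarith [mul_nonneg (sub_nonneg.mpr hi1') (mul_pos pi_pos hk').le]
  · rw [show π - π / (2 * k) = (k - 1 / 2) * π / k by field_simp]
    gcongr
  · have : θ - (i - 1 / 2) * π / k = π / k * (k * θ / π - (i - 1 / 2)) := by
      field_simp
    rw [this, abs_mul, abs_of_pos (by positivity)]
    calc π / k * |k * θ / π - (i - 1 / 2)| ≤ π / k * (1 / 2) := by gcongr
      _ = π / (2 * k) := by ring

-- The paper's `t_j`, up to the constant factor `x_{j-1} - x_j`.
noncomputable def chebyshevQuot (k : ℕ) (a : ℝ) : ℝ[X] := Chebyshev.T ℝ k /ₘ (X - C a)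

theorem natDegree_chebyshevQuot (k : ℕ) (a : ℝ) : (chebyshevQuot k a).natDegree = k - 1 := by
  rw [chebyshevQuot, natDegree_divByMonic _ (monic_X_sub_C a), Chebyshev.natDegree_T,
    natDegree_X_sub_C, Int.natAbs_natCast]

theorem eval_chebyshevQuot_cos_self_mul_sin (k : ℕ) (θ₀ : ℝ) :
    (chebyshevQuot k (cos θ₀)).eval (cos θ₀) * sin θ₀ = k * sin (k * θ₀) := by
  have h := congrArg (eval (cos θ₀))
    (divByMonic_add_X_sub_C_mul_derivative_divByMonic_eq_derivative (Chebyshev.T ℝ k) (cos θ₀))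
  simp only [eval_add, eval_mul, eval_sub, eval_X, eval_C, sub_self, zero_mul, add_zero,
    Chebyshev.T_derivative_eq_U, eval_intCast] at h
  rw [chebyshevQuot, h, mul_assoc, Chebyshev.U_real_cos]
  push_cast
  ring_nf

section

variable {k : ℕ} {θ₀ φ : ℝ}

theorem X_sub_C_mul_chebyshevQuot (h : cos (k * θ₀) = 0) :
    (X - C (cos θ₀)) * chebyshevQuot k (cos θ₀) = Chebyshev.T ℝ k :=
  mul_divByMonic_eq_iff_isRoot.mpr (by simpa [IsRoot, Chebyshev.T_real_cos] using h)

theorem eval_chebyshevQuot_cos_mul_sub (h : cos (k * θ₀) = 0) (φ : ℝ) :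
    (chebyshevQuot k (cos θ₀)).eval (cos φ) * (cos φ - cos θ₀) = cos (k * φ) := by
  simpa [Chebyshev.T_real_cos, mul_comm] using
    congrArg (eval (cos φ)) (X_sub_C_mul_chebyshevQuot h)

theorem eval_chebyshevQuot_cos_mul_sin_mul_sin (h : cos (k * θ₀) = 0) (φ : ℝ) :
    (chebyshevQuot k (cos θ₀)).eval (cos φ) * (sin ((φ + θ₀) / 2) * sin ((φ - θ₀) / 2)) =
      sin (k * ((φ + θ₀) / 2)) * sin (k * ((φ - θ₀) / 2)) := by
  have h1 := eval_chebyshevQuot_cos_mul_sub h φ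
  have h2 := cos_sub_cos (k * φ) (k * θ₀)
  rw [cos_sub_cos] at h1
  rw [h, sub_zero, ← h1] at h2
  ring_nf at h2 ⊢
  linear_combination (-1 / 2 : ℝ) * h2

-- Covers `φ ≡ θ₀ (mod 2π)`, where both sides of the product identity vanish.
theorem abs_eval_chebyshevQuot_cos_mul_abs_sin_of_sin_eq_zero
    (hφ : sin ((φ - θ₀) / 2) = 0) :
    |(chebyshevQuot k (cos θ₀)).eval (cos φ)| * |sin ((φ + θ₀) / 2)| = k * |sin (k * θ₀)| := by
  have hcos : cos φ = cos θ₀ := by rw [← sub_eq_zero, cos_sub_cos, hφ, mul_zero]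
  have hsin : |sin ((φ + θ₀) / 2)| = |sin θ₀| := by
    rw [show (φ + θ₀) / 2 = θ₀ + (φ - θ₀) / 2 by ring, sin_add, hφ, mul_zero, add_zero, abs_mul,
      abs_cos_eq_sqrt_one_sub_sin_sq, hφ]
    norm_num
  rw [hcos, hsin, ← abs_mul, eval_chebyshevQuot_cos_self_mul_sin, abs_mul, Nat.abs_cast]

theorem abs_eval_chebyshevQuot_cos_mul_abs_sin_le (h : cos (k * θ₀) = 0) (φ : ℝ) :
    |(chebyshevQuot k (cos θ₀)).eval (cos φ)| * |sin ((φ + θ₀) / 2)| ≤ k := by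
  by_cases hv : sin ((φ - θ₀) / 2) = 0
  · rw [abs_eval_chebyshevQuot_cos_mul_abs_sin_of_sin_eq_zero hv]
    exact mul_le_of_le_one_right (Nat.cast_nonneg _) (abs_sin_le_one _)
  · refine le_of_mul_le_mul_right ?_ (abs_pos.mpr hv)
    calc _ = |sin (k * ((φ + θ₀) / 2))| * |sin (k * ((φ - θ₀) / 2))| := by
          rw [mul_assoc, ← abs_mul, ← abs_mul, ← abs_mul,
            eval_chebyshevQuot_cos_mul_sin_mul_sin h, abs_mul]
      _ ≤ 1 * (k * |sin ((φ - θ₀) / 2)|) :=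
          mul_le_mul (abs_sin_le_one _) (abs_sin_nat_mul_le _ _) (abs_nonneg _) zero_le_one
      _ = k * |sin ((φ - θ₀) / 2)| := one_mul _

theorem le_four_mul_abs_eval_chebyshevQuot_cos_mul_abs_sin (h : cos (k * θ₀) = 0)
    (hφ : |φ - θ₀| ≤ π / (2 * k)) :
    (k : ℝ) ≤ 4 * (|(chebyshevQuot k (cos θ₀)).eval (cos φ)| * |sin ((φ + θ₀) / 2)|) := by
  have hk : (k : ℝ) ≠ 0 := by
    rintro hk
    simp [hk] at h
  have hsin : |sin (k * θ₀)| = 1 := by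
    rw [abs_sin_eq_sqrt_one_sub_cos_sq, h]; norm_num
  by_cases hv : sin ((φ - θ₀) / 2) = 0
  · rw [abs_eval_chebyshevQuot_cos_mul_abs_sin_of_sin_eq_zero hv, hsin]
    linarith
  set v := (φ - θ₀) / 2 with hv_def
  have hkv : |k * v| ≤ π / 4 := by
    rw [abs_mul, Nat.abs_cast, hv_def, abs_div, abs_two]
    calc (k : ℝ) * (|φ - θ₀| / 2) ≤ k * (π / (2 * k) / 2) := by gcongr
      _ = π / 4 := by field_simp; ring
  have hcos : 1 / 2 ≤ |cos (k * v)| := by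
    have h1 := one_sub_sq_div_two_le_cos (x := k * v)
    have h2 : (k * v) ^ 2 ≤ (π / 4) ^ 2 := by
      rw [← sq_abs]; exact pow_le_pow_left₀ (abs_nonneg _) hkv 2
    nlinarith [le_abs_self (cos (k * v)), pi_le_four, pi_pos]
  have hsinkv : k * |sin v| / 2 ≤ |sin (k * v)| := by
    have h1 := abs_div_two_le_abs_sin (hkv.trans (by linarith [pi_pos]))
    rw [abs_mul, Nat.abs_cast] at h1
    nlinarith [abs_sin_le_abs (x := v), Nat.cast_nonneg (α := ℝ) k]
  have hsum : |sin (k * ((φ + θ₀) / 2))| = |cos (k * v)| := by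
    rw [show (k : ℝ) * ((φ + θ₀) / 2) = k * θ₀ + k * v by rw [hv_def]; ring, sin_add, h,
      zero_mul, add_zero, abs_mul, hsin, one_mul]
  refine le_of_mul_le_mul_right ?_ (abs_pos.mpr hv)
  calc (k : ℝ) * |sin v| = 4 * (1 / 2 * (k * |sin v| / 2)) := by ring
    _ ≤ 4 * (|sin (k * ((φ + θ₀) / 2))| * |sin (k * v)|) := by
        rw [hsum]; gcongr
    _ = _ := by
        rw [← abs_mul, ← eval_chebyshevQuot_cos_mul_sin_mul_sin h, abs_mul, abs_mul]; ring

theorem abs_eval_chebyshevQuot_mul_sin_le {x : ℝ} (h : cos (k * θ₀) = 0) (hθ₀ : θ₀ ∈ Icc 0 π)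
    (hx : x ∈ Icc (-1 : ℝ) 1) : |(chebyshevQuot k (cos θ₀)).eval x| * sin θ₀ ≤ 2 * k := by
  have h1 := abs_eval_chebyshevQuot_cos_mul_abs_sin_le h (arccos x)
  rw [cos_arccos hx.1 hx.2] at h1
  have h2 := sin_div_two_le_sin_add_div_two hθ₀ ⟨arccos_nonneg x, arccos_le_pi x⟩
  nlinarith [abs_nonneg ((chebyshevQuot k (cos θ₀)).eval x),
    le_abs_self (sin ((arccos x + θ₀) / 2))]

end

noncomputable def pointwiseStep (n : ℕ) (y : ℝ) : ℝ := ((n : ℝ) ^ 2)⁻¹ + (n : ℝ)⁻¹ * √(1 - y ^ 2)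

theorem pointwiseStep_mul_self {n : ℕ} (hn : n ≠ 0) (y : ℝ) :
    pointwiseStep n y * n = (n : ℝ)⁻¹ + sin (arccos y) := by
  rw [pointwiseStep, sin_arccos]
  field_simp

theorem pointwiseStep_pos {n : ℕ} (hn : n ≠ 0) (y : ℝ) : 0 < pointwiseStep n y := by
  have : 0 < (n : ℝ) := by exact_mod_cast Nat.pos_of_ne_zero hn
  unfold pointwiseStep
  positivity

section

variable {k : ℕ} {θ θ₀ y : ℝ}

theorem abs_sin_add_div_two_le_two_mul_sin (hk : 1 ≤ k)
    (hθ₀ : θ₀ ∈ Icc (π / (2 * k)) (π - π / (2 * k))) (hθ : |θ - θ₀| ≤ π / (2 * k)) :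
    |sin ((θ + θ₀) / 2)| ≤ 2 * sin θ₀ := by
  have hs := inv_le_sin_of_mem_Icc hk hθ₀
  have hs_abs : |sin θ₀| = sin θ₀ := abs_of_nonneg ((inv_nonneg.mpr k.cast_nonneg).trans hs)
  have hlip := abs_sin_sub_sin_le ((θ + θ₀) / 2) θ₀
  rw [show (θ + θ₀) / 2 - θ₀ = (θ - θ₀) / 2 by ring, abs_div, abs_two] at hlip
  linarith [abs_sub_abs_le_abs_sub (sin ((θ + θ₀) / 2)) (sin θ₀),
    pi_div_two_mul_le_two_mul_inv k]

theorem le_eight_mul_sin_mul_abs_eval_chebyshevQuot (hk : 1 ≤ k) (h : cos (k * θ₀) = 0)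
    (hθ₀ : θ₀ ∈ Icc (π / (2 * k)) (π - π / (2 * k))) (hy : y ∈ Icc (-1 : ℝ) 1)
    (hθ : |arccos y - θ₀| ≤ π / (2 * k)) :
    (k : ℝ) ≤ 8 * sin θ₀ * |(chebyshevQuot k (cos θ₀)).eval y| := by
  have h1 := le_four_mul_abs_eval_chebyshevQuot_cos_mul_abs_sin h hθ
  rw [cos_arccos hy.1 hy.2] at h1
  have h2 := abs_sin_add_div_two_le_two_mul_sin hk hθ₀ hθ
  nlinarith [abs_nonneg ((chebyshevQuot k (cos θ₀)).eval y)]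

theorem abs_cos_sub_cos_mul_le (hk : 1 ≤ k)
    (hθ₀ : θ₀ ∈ Icc (π / (2 * k)) (π - π / (2 * k))) (hθ : |θ - θ₀| ≤ π / (2 * k)) :
    |cos θ₀ - cos θ| * k ≤ 4 * sin θ₀ := by
  have hs : 0 ≤ sin θ₀ := (inv_nonneg.mpr (Nat.cast_nonneg k)).trans (inv_le_sin_of_mem_Icc hk hθ₀)
  have hsub : |sin ((θ₀ - θ) / 2)| ≤ π / (2 * k) / 2 :=
    calc |sin ((θ₀ - θ) / 2)| ≤ |(θ₀ - θ) / 2| := abs_sin_le_abs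
      _ = |θ - θ₀| / 2 := by rw [abs_div, abs_sub_comm, abs_two]
      _ ≤ π / (2 * k) / 2 := by gcongr
  calc |cos θ₀ - cos θ| * k = 2 * |sin ((θ + θ₀) / 2)| * |sin ((θ₀ - θ) / 2)| * k := by
        rw [cos_sub_cos, add_comm θ₀, abs_mul, abs_mul, abs_neg, abs_two]
    _ ≤ 2 * (2 * sin θ₀) * (π / (2 * k) / 2) * k := by
        gcongr ?_ * _
        exact mul_le_mul (by linarith [abs_sin_add_div_two_le_two_mul_sin hk hθ₀ hθ]) hsub
          (abs_nonneg _) (by linarith)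
    _ = π * sin θ₀ := by field_simp
    _ ≤ 4 * sin θ₀ := mul_le_mul_of_nonneg_right pi_le_four hs

theorem pointwiseStep_add_abs_sub_mul_le (hk : 1 ≤ k)
    (hθ₀ : θ₀ ∈ Icc (π / (2 * k)) (π - π / (2 * k))) (hy : y ∈ Icc (-1 : ℝ) 1)
    (hθ : |arccos y - θ₀| ≤ π / (2 * k)) :
    (pointwiseStep k y + |cos θ₀ - y|) * k ≤ 8 * sin θ₀ := by
  have h1 := abs_cos_sub_cos_mul_le hk hθ₀ hθ
  rw [cos_arccos hy.1 hy.2] at h1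
  have h2 := (le_abs_self _).trans ((abs_sin_sub_sin_le (arccos y) θ₀).trans hθ)
  rw [add_mul, pointwiseStep_mul_self (by omega)]
  linarith [pi_div_two_mul_le_two_mul_inv k, inv_le_sin_of_mem_Icc hk hθ₀]

theorem sin_le_two_mul_pointwiseStep_mul (hk : 1 ≤ k) (hθ : |arccos y - θ₀| ≤ π / (2 * k)) :
    sin θ₀ ≤ 2 * (pointwiseStep k y * k) := by
  have h1 := neg_abs_le (sin (arccos y) - sin θ₀)
  have h2 := (abs_sin_sub_sin_le (arccos y) θ₀).trans hθ
  have h3 : 0 ≤ sin (arccos y) := sin_nonneg_of_nonneg_of_le_pi (arccos_nonneg y) (arccos_le_pi y)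
  rw [pointwiseStep_mul_self (by omega)]
  linarith [pi_div_two_mul_le_two_mul_inv k, inv_nonneg.mpr (Nat.cast_nonneg (α := ℝ) k)]

end

theorem exists_poly_abs_eval_le_mul_div {k : ℕ} (hk : 1 ≤ k) {y : ℝ}
    (hy : y ∈ Icc (-1 : ℝ) 1) :
    ∃ Q : ℝ[X], Q.natDegree ≤ k - 1 ∧ Q.eval y = 1 ∧ ∀ x ∈ Icc (-1 : ℝ) 1,
      |Q.eval x| ≤ 272 * (pointwiseStep k y / (pointwiseStep k y + |x - y|)) := by
  obtain ⟨θ₀, hcos, hθ₀, hθ⟩ := exists_cos_mul_eq_zero_near hk ⟨arccos_nonneg y, arccos_le_pi y⟩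
  have hk' : (0 : ℝ) < k := by exact_mod_cast hk
  have hθ₀π : θ₀ ∈ Icc 0 π := by
    have : 0 ≤ π / (2 * k) := by positivity
    exact ⟨this.trans hθ₀.1, hθ₀.2.trans (by linarith)⟩
  have hSy := le_eight_mul_sin_mul_abs_eval_chebyshevQuot hk hcos hθ₀ hy hθ
  have hρ := pointwiseStep_add_abs_sub_mul_le hk hθ₀ hy hθ
  have hρ' := sin_le_two_mul_pointwiseStep_mul hk hθ
  set S := chebyshevQuot k (cos θ₀)
  set ρ := pointwiseStep k y
  have hρpos : 0 < ρ := pointwiseStep_pos (by omega) y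
  have hSy_pos : 0 < |S.eval y| := by
    refine (abs_nonneg _).lt_of_ne fun h => ?_
    rw [← h, mul_zero] at hSy
    linarith
  have hSy_ne : S.eval y ≠ 0 := abs_pos.mp hSy_pos
  refine ⟨C (S.eval y)⁻¹ * S, ?_, ?_, fun x hx => ?_⟩
  · rw [natDegree_C_mul (inv_ne_zero hSy_ne), natDegree_chebyshevQuot]
  · rw [eval_mul, eval_C, inv_mul_cancel₀ hSy_ne]
  · have hnear : |S.eval x| * |x - cos θ₀| ≤ 1 := by
      have h1 := eval_chebyshevQuot_cos_mul_sub hcos (arccos x)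
      rw [cos_arccos hx.1 hx.2] at h1
      rw [← abs_mul, h1]
      exact abs_cos_le_one _
    have hupper : |S.eval x| * (ρ + |x - y|) ≤ 17 := by
      have h1 : |x - y| ≤ |x - cos θ₀| + |cos θ₀ - y| := abs_sub_le _ _ _
      have h2 : |S.eval x| * (ρ + |cos θ₀ - y|) * k ≤ 16 * k := by
        nlinarith [abs_eval_chebyshevQuot_mul_sin_le hcos hθ₀π hx, abs_nonneg (S.eval x)]
      have h3 := le_of_mul_le_mul_right h2 hk'
      nlinarith [abs_nonneg (S.eval x)]
    have hlower : 1 ≤ 16 * ρ * |S.eval y| := by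
      have : (1 : ℝ) * k ≤ 16 * ρ * |S.eval y| * k := by nlinarith
      exact le_of_mul_le_mul_right this hk'
    rw [eval_mul, eval_C, abs_mul, abs_inv, inv_mul_le_iff₀ hSy_pos, mul_div_assoc',
      mul_div_assoc', le_div_iff₀ (by positivity)]
    nlinarith

theorem pointwiseStep_le_sq_mul {a b : ℕ} {c : ℝ} (hb : b ≠ 0) (hc : 1 ≤ c)
    (hba : (b : ℝ) ≤ c * a) (y : ℝ) : pointwiseStep a y ≤ c ^ 2 * pointwiseStep b y := by
  have hb' : (0 : ℝ) < b := by exact_mod_cast Nat.pos_of_ne_zero hb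
  have ha : (0 : ℝ) < a := pos_of_mul_pos_right (hb'.trans_le hba) (by linarith)
  have h1 : (a : ℝ)⁻¹ ≤ c * (b : ℝ)⁻¹ := by
    rw [inv_eq_one_div, ← div_eq_mul_inv, div_le_div_iff₀ ha hb']; linarith
  have h2 : ((a : ℝ) ^ 2)⁻¹ ≤ c ^ 2 * ((b : ℝ) ^ 2)⁻¹ := by
    rw [← inv_pow, ← inv_pow, ← mul_pow]
    exact pow_le_pow_left₀ (by positivity) h1 2
  have h3 : (a : ℝ)⁻¹ ≤ c ^ 2 * (b : ℝ)⁻¹ :=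
    h1.trans (mul_le_mul_of_nonneg_right (by nlinarith) (by positivity))
  have h4 := mul_le_mul_of_nonneg_right h3 (sqrt_nonneg (1 - y ^ 2))
  rw [pointwiseStep, pointwiseStep]
  linarith

theorem div_add_le_mul_div_add {r r' t A : ℝ} (hr : 0 < r) (hr' : 0 < r') (ht : 0 ≤ t)
    (hA : 1 ≤ A) (h : r' ≤ A * r) : r' / (r' + t) ≤ A * (r / (r + t)) := by
  rw [mul_div_assoc', div_le_div_iff₀ (by positivity) (by positivity)]
  nlinarith [mul_le_mul_of_nonneg_right h ht, mul_le_mul_of_nonneg_right hA (mul_pos hr hr').le]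

/-- With `ρ_n(x) = n^{-2} + n^{-1}√(1-x²)`, for every `m ≥ 1` there exists
`c₁ > 0` (depending only on `m`) such that for all `n ≥ 1` and `y ∈ [-1,1]` there is a real
polynomial `P` of degree `≤ n` with `P(y) = 1` and
`|P(x)| ≤ c₁ (ρ_n(y)/(ρ_n(y)+|x-y|))^m` for all `x ∈ [-1,1]`. -/
theorem stmt11 (m : ℕ) (hm : 1 ≤ m) :
    ∃ c₁ : ℝ, 0 < c₁ ∧ ∀ n : ℕ, 1 ≤ n → ∀ y ∈ Set.Icc (-1 : ℝ) 1,
      ∃ P : Polynomial ℝ, P.natDegree ≤ n ∧ P.eval y = 1 ∧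
        ∀ x ∈ Set.Icc (-1 : ℝ) 1,
          |P.eval x| ≤ c₁ *
            ((((n : ℝ) ^ 2)⁻¹ + (n : ℝ)⁻¹ * Real.sqrt (1 - y ^ 2)) /
              ((((n : ℝ) ^ 2)⁻¹ + (n : ℝ)⁻¹ * Real.sqrt (1 - y ^ 2)) + |x - y|)) ^ m := by
  refine ⟨(272 * (m : ℝ) ^ 2) ^ m, by positivity, fun n hn y hy => ?_⟩
  obtain ⟨Q, hdeg, hQy, hQ⟩ :=
    exists_poly_abs_eval_le_mul_div (k := n / m + 1) (Nat.le_add_left 1 _) hy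
  refine ⟨Q ^ m, ?_, by rw [eval_pow, hQy, one_pow], fun x hx => ?_⟩
  · rw [natDegree_pow]
    exact (Nat.mul_le_mul_left m (by simpa using hdeg)).trans (Nat.mul_div_le n m)
  · have hρ : pointwiseStep (n / m + 1) y ≤ (m : ℝ) ^ 2 * pointwiseStep n y :=
      pointwiseStep_le_sq_mul (by omega) (by exact_mod_cast hm)
        (by exact_mod_cast (Nat.lt_mul_div_succ n hm).le) y
    have hQx : |Q.eval x| ≤
        272 * (m : ℝ) ^ 2 * (pointwiseStep n y / (pointwiseStep n y + |x - y|)) := by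
      refine (hQ x hx).trans ?_
      rw [mul_assoc]
      gcongr
      exact div_add_le_mul_div_add (pointwiseStep_pos (by omega) y)
        (pointwiseStep_pos (Nat.succ_ne_zero _) y) (abs_nonneg _)
        (one_le_pow₀ (by exact_mod_cast hm)) hρ
    rw [eval_pow, abs_pow, ← mul_pow]
    exact pow_le_pow_left₀ (abs_nonneg _) hQx m
end

section
/- For every n ≥ 1 there exists an affine transformation T of ℝ³ with |det T| ≥ (160 n)^{−1} such that T maps the closed Euclidean unit ball B into the half-ball D = {(x₁,x₂,x₃) : x₁²+x₂²+x₃² ≤ 1, x₃ ≥ 0} and T(1 + n^{−2}/3, 0, 0) = (1, 0, 0). -/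
/-!
Write `w = 1 + ε - x₀` for the distance from `x` to the apex `(1 + ε, 0, 0)` along the first
axis; the map sends `x` to `(1 - w / 2, x₁ / 8, μ x₂ + w / 8)`. On the unit ball
`x₁² + x₂² ≤ 2 (1 - x₀) ≤ 2 w`, and since `w² ≥ 4 ε (1 - x₀)`, the condition `32 μ² ≤ ε` gives
`|μ x₂| ≤ w / 8`. So the image has `x₂ ≥ 0`, and its squared norm is at most
`1 - w + 5 w² / 16 + w / 32 ≤ 1` because `w ≤ 3`. For `ε = n⁻² / 3` and `μ = (10 n)⁻¹` the
determinant `μ / 16` is `(160 n)⁻¹`.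
-/

open Set

theorem sq_add_sq_le_two_mul_one_sub {a b c : ℝ} (h : a ^ 2 + b ^ 2 + c ^ 2 ≤ 1) :
    b ^ 2 + c ^ 2 ≤ 2 * (1 - a) := by
  nlinarith [sq_nonneg (1 - a)]

theorem abs_mul_le_of_sq_le_two_mul {ε μ s c : ℝ} (hε : 0 ≤ ε) (hs : 0 ≤ s)
    (hμ : 32 * μ ^ 2 ≤ ε) (hc : c ^ 2 ≤ 2 * s) : |μ * c| ≤ (ε + s) / 8 := by
  refine abs_le_of_sq_le_sq ?_ (by positivity)
  calc (μ * c) ^ 2 = μ ^ 2 * c ^ 2 := by ring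
    _ ≤ ε / 32 * (2 * s) := by gcongr; linarith
    _ ≤ ((ε + s) / 8) ^ 2 := by nlinarith [sq_nonneg (ε - s)]

noncomputable section

namespace HalfBall

def unitBall : Set (Fin 3 → ℝ) := {x | x 0 ^ 2 + x 1 ^ 2 + x 2 ^ 2 ≤ 1}

def upperHalfBall : Set (Fin 3 → ℝ) := {x | x 0 ^ 2 + x 1 ^ 2 + x 2 ^ 2 ≤ 1 ∧ 0 ≤ x 2}

def linearPart (μ : ℝ) : Matrix (Fin 3) (Fin 3) ℝ := !![1 / 2, 0, 0; 0, 1 / 8, 0; -1 / 8, 0, μ]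

def map (ε μ : ℝ) : (Fin 3 → ℝ) →ᵃ[ℝ] (Fin 3 → ℝ) :=
  (Matrix.toLin' (linearPart μ)).toAffineMap + AffineMap.const ℝ _ ![(1 - ε) / 2, 0, (1 + ε) / 8]

theorem map_apply (ε μ : ℝ) (x : Fin 3 → ℝ) :
    map ε μ x = ![1 - (1 + ε - x 0) / 2, x 1 / 8, μ * x 2 + (1 + ε - x 0) / 8] := by
  ext i
  fin_cases i <;>
    simp [map, linearPart, dotProduct, Fin.sum_univ_three] <;> ring

theorem det_map_linear (ε μ : ℝ) : LinearMap.det (map ε μ).linear = μ / 16 := by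
  simp only [map, AffineMap.add_linear, LinearMap.toAffineMap_linear, AffineMap.const_linear,
    add_zero, LinearMap.det_toLin', linearPart, Matrix.det_fin_three, Matrix.of_apply,
    Matrix.cons_val', Matrix.cons_val_zero, Matrix.cons_val_one, Matrix.cons_val,
    Matrix.cons_val_fin_one]
  ring

theorem map_apex (ε μ : ℝ) : map ε μ ![1 + ε, 0, 0] = ![1, 0, 0] := by
  simp [map_apply]

theorem mapsTo_map {ε μ : ℝ} (hε₀ : 0 ≤ ε) (hε₁ : ε ≤ 1) (hμ : 32 * μ ^ 2 ≤ ε) :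
    MapsTo (map ε μ) unitBall upperHalfBall := by
  intro x (hx : x 0 ^ 2 + x 1 ^ 2 + x 2 ^ 2 ≤ 1)
  have hyz := sq_add_sq_le_two_mul_one_sub hx
  have hs₀ : 0 ≤ 1 - x 0 := by nlinarith
  have hs₂ : 1 - x 0 ≤ 2 := by nlinarith
  have htilt := abs_mul_le_of_sq_le_two_mul hε₀ hs₀ hμ (c := x 2) (by nlinarith)
  rw [abs_le] at htilt
  show _ ∧ _
  simp only [map_apply, Matrix.cons_val_zero, Matrix.cons_val_one, Matrix.cons_val_two,
    Matrix.head_cons, Matrix.tail_cons]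
  set w := 1 + ε - x 0
  have hzw : (μ * x 2 + w / 8) ^ 2 ≤ w ^ 2 / 16 := by nlinarith
  constructor
  · nlinarith
  · linarith

end HalfBall

end

theorem stmt15_general (n : ℕ) :
    ∃ T : (Fin 3 → ℝ) →ᵃ[ℝ] (Fin 3 → ℝ),
      (160 * (n : ℝ))⁻¹ ≤ |LinearMap.det T.linear| ∧
      T '' {x : Fin 3 → ℝ | (x 0) ^ 2 + (x 1) ^ 2 + (x 2) ^ 2 ≤ 1}
        ⊆ {x : Fin 3 → ℝ | (x 0) ^ 2 + (x 1) ^ 2 + (x 2) ^ 2 ≤ 1 ∧ 0 ≤ x 2} ∧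
      T ![1 + ((n : ℝ) ^ 2)⁻¹ / 3, 0, 0] = ![1, 0, 0] := by
  set ε : ℝ := ((n : ℝ) ^ 2)⁻¹ / 3 with hε
  set μ : ℝ := (10 * (n : ℝ))⁻¹
  have hε₁ : ε ≤ 1 := by
    have := Nat.cast_inv_le_one (α := ℝ) (n ^ 2)
    push_cast at this
    linarith [hε]
  have hμ : 32 * μ ^ 2 ≤ ε := by
    have hμε : μ ^ 2 = ((n : ℝ) ^ 2)⁻¹ / 100 := by ring
    rw [hμε]
    linarith [hε, inv_nonneg.mpr (sq_nonneg (n : ℝ))]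
  refine ⟨HalfBall.map ε μ, ?_, (HalfBall.mapsTo_map (by positivity) hε₁ hμ).image_subset,
    HalfBall.map_apex ε μ⟩
  rw [HalfBall.det_map_linear, abs_of_nonneg (by positivity)]
  exact le_of_eq (by ring)

/-- For every `n ≥ 1` there is an affine transformation `T` of `ℝ³` with
`|det T| ≥ (160 n)⁻¹` mapping the closed Euclidean unit ball into the half-ball
`D = {x : ‖x‖₂ ≤ 1, x₃ ≥ 0}` and sending `(1 + n^{-2}/3, 0, 0)` to `(1,0,0)`. -/
theorem stmt15 (n : ℕ) (hn : 1 ≤ n) :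
    ∃ T : (Fin 3 → ℝ) →ᵃ[ℝ] (Fin 3 → ℝ),
      (160 * (n : ℝ))⁻¹ ≤ |LinearMap.det T.linear| ∧
      T '' {x : Fin 3 → ℝ | (x 0) ^ 2 + (x 1) ^ 2 + (x 2) ^ 2 ≤ 1}
        ⊆ {x : Fin 3 → ℝ | (x 0) ^ 2 + (x 1) ^ 2 + (x 2) ^ 2 ≤ 1 ∧ 0 ≤ x 2} ∧
      T ![1 + ((n : ℝ) ^ 2)⁻¹ / 3, 0, 0] = ![1, 0, 0] :=
  stmt15_general n
end

section
/- The singleton {(1,0,0)} is a sharp subset of the half-ball D = {(x₁,x₂,x₃) ∈ ℝ³ : x₁²+x₂²+x₃² ≤ 1, x₃ ≥ 0}: there is a constant c > 0 (one may take c = 1/8) such that for every x ∈ D there exists an affine transformation T of ℝ³ with |det T| ≥ c, T(1,0,0) = x, and T(D) ⊂ D. -/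
/-!
Every point `x` of the half-ball `D` is the image of `e₁ = (1,0,0)` under an affine self-map of
`D` with determinant at least `1/64`. If `‖x‖ ≤ 1/2`, take the homothety of ratio `1/4` sending
`e₁` to `x`; its centre `(4x - e₁)/3` lies in `D`, so by convexity it maps `D` into `D`.
Otherwise write `x = n · R₀₁ (R₀₂ e₁)` in spherical coordinates, with `1/2 < n ≤ 1`, `R₀₁` a
rotation about the `x₃`-axis and `R₀₂` a rotation by an angle in `[0, π/2]` in the `x₁x₃`-plane.
The homothety of ratio `1/2` centred at `e₁` maps `D` into the quarter ball `D ∩ {x₁ ≥ 0}`, which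
`R₀₂` maps back into `D`; `R₀₁` and the homothety of ratio `n` centred at `0` preserve `D`.
-/

open Set AffineMap Matrix

def halfBall : Set (Fin 3 → ℝ) := {z | z 0 ^ 2 + z 1 ^ 2 + z 2 ^ 2 ≤ 1 ∧ 0 ≤ z 2}

def AffineReachable (K : Set (Fin 3 → ℝ)) (c : ℝ) (y x : Fin 3 → ℝ) : Prop :=
  ∃ T : (Fin 3 → ℝ) →ᵃ[ℝ] (Fin 3 → ℝ), c ≤ |LinearMap.det T.linear| ∧ T y = x ∧ T '' K ⊆ K

theorem Convex.mapsTo_homothety {E : Type*} [AddCommGroup E] [Module ℝ E] {K : Set E}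
    (hK : Convex ℝ K) {c : E} (hc : c ∈ K) {r : ℝ} (hr₀ : 0 ≤ r) (hr₁ : r ≤ 1) :
    MapsTo (homothety c r) K K := fun _ hz =>
  (homothety_eq_lineMap c r _).symm ▸ hK.lineMap_mem hc hz ⟨hr₀, hr₁⟩

theorem det_homothety_linear {k V : Type*} [Field k] [AddCommGroup V] [Module k V]
    [FiniteDimensional k V] (c : V) (r : k) :
    LinearMap.det (homothety c r).linear = r ^ Module.finrank k V := by
  simp [homothety_linear, LinearMap.det_smul]

theorem exists_polar_coords (a b : ℝ) :
    ∃ r c s : ℝ, 0 ≤ r ∧ c ^ 2 + s ^ 2 = 1 ∧ a = r * c ∧ b = r * s :=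
  ⟨‖(⟨a, b⟩ : ℂ)‖, _, _, norm_nonneg _, Real.cos_sq_add_sin_sq _,
    (Complex.norm_mul_cos_arg ⟨a, b⟩).symm, (Complex.norm_mul_sin_arg ⟨a, b⟩).symm⟩

theorem convex_halfBall : Convex ℝ halfBall := by
  rintro u ⟨hu, hu₂⟩ v ⟨hv, hv₂⟩ a b ha hb hab
  simp only [halfBall, mem_ofPred_eq, Pi.add_apply, Pi.smul_apply, smul_eq_mul]
  refine ⟨?_, by positivity⟩
  obtain rfl : b = 1 - a := by linarith
  nlinarith [mul_nonneg ha hb, sq_nonneg (u 0 - v 0), sq_nonneg (u 1 - v 1),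
    sq_nonneg (u 2 - v 2)]

theorem mapsTo_homothety_e₁_half :
    MapsTo (homothety ![1, 0, 0] (1 / 2 : ℝ)) halfBall (halfBall ∩ {z | 0 ≤ z 0}) := by
  intro z hz
  refine ⟨convex_halfBall.mapsTo_homothety (by simp [halfBall]) (by norm_num) (by norm_num) hz, ?_⟩
  obtain ⟨hz, -⟩ := hz
  change 0 ≤ (1 / 2 : ℝ) * (z 0 - 1) + 1
  nlinarith [sq_nonneg (z 1), sq_nonneg (z 2), sq_nonneg (z 0 + 1)]

-- Coordinates are indexed from `0`: `rot01` rotates about the `x₃`-axis, `rot02` in the `x₁x₃`-plane.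
def rot01 (c s : ℝ) : Matrix (Fin 3) (Fin 3) ℝ := !![c, -s, 0; s, c, 0; 0, 0, 1]

def rot02 (c s : ℝ) : Matrix (Fin 3) (Fin 3) ℝ := !![c, 0, -s; 0, 1, 0; s, 0, c]

section Rotations

variable (c s : ℝ)

@[simp]
theorem rot01_mulVec (z : Fin 3 → ℝ) :
    rot01 c s *ᵥ z = ![c * z 0 - s * z 1, s * z 0 + c * z 1, z 2] := by
  ext i
  fin_cases i <;> simp [rot01, mulVec, dotProduct, Fin.sum_univ_three, sub_eq_add_neg]

@[simp]
theorem rot02_mulVec (z : Fin 3 → ℝ) :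
    rot02 c s *ᵥ z = ![c * z 0 - s * z 2, z 1, s * z 0 + c * z 2] := by
  ext i
  fin_cases i <;> simp [rot02, mulVec, dotProduct, Fin.sum_univ_three, sub_eq_add_neg]

theorem det_rot01 : (rot01 c s).det = c ^ 2 + s ^ 2 := by
  simp [rot01, det_fin_three]; ring

theorem det_rot02 : (rot02 c s).det = c ^ 2 + s ^ 2 := by
  simp [rot02, det_fin_three]; ring

variable {c s}

theorem mapsTo_rot01 (h : c ^ 2 + s ^ 2 = 1) :
    MapsTo (toLin' (rot01 c s)) halfBall halfBall := by
  rintro z ⟨hz, hz₂⟩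
  simp only [halfBall, mem_ofPred_eq, toLin'_apply, rot01_mulVec, cons_val_zero, cons_val_one,
    cons_val]
  exact ⟨by nlinarith, hz₂⟩

theorem mapsTo_rot02 (h : c ^ 2 + s ^ 2 = 1) (hc : 0 ≤ c) (hs : 0 ≤ s) :
    MapsTo (toLin' (rot02 c s)) (halfBall ∩ {z | 0 ≤ z 0}) halfBall := by
  rintro z ⟨⟨hz, hz₂⟩, hz₀ : 0 ≤ z 0⟩
  simp only [halfBall, mem_ofPred_eq, toLin'_apply, rot02_mulVec, cons_val_zero, cons_val_one,
    cons_val]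
  exact ⟨by nlinarith, by positivity⟩

end Rotations

theorem affineReachable_of_sq_le_quarter {x : Fin 3 → ℝ} (hx : x ∈ halfBall)
    (hsmall : x 0 ^ 2 + x 1 ^ 2 + x 2 ^ 2 ≤ 1 / 4) :
    AffineReachable halfBall (1 / 64) ![1, 0, 0] x := by
  obtain ⟨-, hx₂⟩ := hx
  set q : Fin 3 → ℝ := (4 / 3 : ℝ) • x - (1 / 3 : ℝ) • ![1, 0, 0] with hq
  have hq_mem : q ∈ halfBall := by
    simp only [halfBall, mem_ofPred_eq, hq, Pi.sub_apply, Pi.smul_apply, smul_eq_mul,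
      cons_val_zero, cons_val_one, cons_val]
    constructor
    · nlinarith [sq_nonneg (x 0 + 1 / 2)]
    · linarith
  refine ⟨homothety q (1 / 4), ?_, ?_, ?_⟩
  · rw [det_homothety_linear, Module.finrank_fin_fun]
    norm_num
  · rw [homothety_apply, hq, vsub_eq_sub, vadd_eq_add]
    module
  · exact (convex_halfBall.mapsTo_homothety hq_mem (by norm_num) (by norm_num)).image_subset

theorem affineReachable_of_quarter_lt_sq {x : Fin 3 → ℝ} (hx : x ∈ halfBall)
    (hlarge : 1 / 4 < x 0 ^ 2 + x 1 ^ 2 + x 2 ^ 2) :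
    AffineReachable halfBall (1 / 64) ![1, 0, 0] x := by
  obtain ⟨hx, hx₂⟩ := hx
  obtain ⟨p, c, s, hp, hcs, h₀, h₁⟩ := exists_polar_coords (x 0) (x 1)
  obtain ⟨n, c', s', hn, hcs', hp', h₂⟩ := exists_polar_coords p (x 2)
  have hn_sq : n ^ 2 = x 0 ^ 2 + x 1 ^ 2 + x 2 ^ 2 := by
    rw [h₀, h₁, h₂, hp']
    linear_combination (-n ^ 2 * c' ^ 2) * hcs - n ^ 2 * hcs'
  have hn_half : 1 / 2 < n := by nlinarith
  have hn_one : n ≤ 1 := by nlinarith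
  have hc' : 0 ≤ c' := nonneg_of_mul_nonneg_right (hp'.symm ▸ hp) (by linarith)
  have hs' : 0 ≤ s' := nonneg_of_mul_nonneg_right (h₂.symm ▸ hx₂) (by linarith)
  have h0_mem : (0 : Fin 3 → ℝ) ∈ halfBall := by simp [halfBall]
  refine ⟨(homothety 0 n).comp <| (toLin' (rot01 c s)).toAffineMap.comp <|
    (toLin' (rot02 c' s')).toAffineMap.comp (homothety ![1, 0, 0] (1 / 2)), ?_, ?_, ?_⟩
  · simp only [comp_linear, LinearMap.det_comp, det_homothety_linear, Module.finrank_fin_fun,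
      LinearMap.toAffineMap_linear, LinearMap.det_toLin', det_rot01, det_rot02, hcs, hcs']
    rw [abs_of_nonneg (by positivity)]
    nlinarith
  · ext i
    fin_cases i <;> simp [homothety_apply, h₀, h₁, h₂, hp', mul_comm, mul_left_comm]
  · exact ((convex_halfBall.mapsTo_homothety h0_mem hn hn_one).comp <| (mapsTo_rot01 hcs).comp <|
      (mapsTo_rot02 hcs' hc' hs').comp mapsTo_homothety_e₁_half).image_subset

/-- The singleton `{(1,0,0)}` is a sharp subset of the half-ball
`D = {x ∈ ℝ³ : ‖x‖₂ ≤ 1, x₃ ≥ 0}`: there is `c > 0` such that for every `x ∈ D` there is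
an affine transformation `T` of `ℝ³` with `|det T| ≥ c`, `T(1,0,0) = x` and `T(D) ⊆ D`. -/
theorem stmt16 :
    ∃ c : ℝ, 0 < c ∧
      ∀ x ∈ {z : Fin 3 → ℝ | (z 0) ^ 2 + (z 1) ^ 2 + (z 2) ^ 2 ≤ 1 ∧ 0 ≤ z 2},
        ∃ T : (Fin 3 → ℝ) →ᵃ[ℝ] (Fin 3 → ℝ),
          c ≤ |LinearMap.det T.linear| ∧
          T ![1, 0, 0] = x ∧
          T '' {z : Fin 3 → ℝ | (z 0) ^ 2 + (z 1) ^ 2 + (z 2) ^ 2 ≤ 1 ∧ 0 ≤ z 2}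
            ⊆ {z : Fin 3 → ℝ | (z 0) ^ 2 + (z 1) ^ 2 + (z 2) ^ 2 ≤ 1 ∧ 0 ≤ z 2} := by
  refine ⟨1 / 64, by norm_num, fun x hx => ?_⟩
  rcases le_or_gt (x 0 ^ 2 + x 1 ^ 2 + x 2 ^ 2) (1 / 4) with hsmall | hlarge
  · exact affineReachable_of_sq_le_quarter hx hsmall
  · exact affineReachable_of_quarter_lt_sq hx hlarge
end

section
/- Let A ⊂ ℝ^k and B ⊂ ℝ^l be bounded domains with positive measure, and let Λ_n^A(x) := C(𝒫_{n,k}, A, x) and Λ_n^B(y) := C(𝒫_{n,l}, B, y) denote the inverse Christoffel functions for total-degree-n polynomials with Lebesgue measure. Then for all x ∈ A, y ∈ B and n ≥ 2: Λ_{⌊n/2⌋}^A(x)·Λ_{⌊n/2⌋}^B(y) ≤ C(𝒫_{n,k+l}, A×B, (x,y)) ≤ Λ_n^A(x)·Λ_n^B(y). -/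
/-!
Write `Λ` for an inverse Christoffel function. By scaling, `Λ(z)⁻¹ |Q(z)|² ≤ ‖Q‖²` for every
admissible `Q`, with equality for an extremal one. Lower bound: the product of the extremal
polynomials of degree `⌊n/2⌋` for `A` at `x` and for `B` at `y` has degree `≤ n`, modulus one
at `(x, y)`, and, by Fubini, squared norm `Λ_{⌊n/2⌋}^A(x)⁻¹ Λ_{⌊n/2⌋}^B(y)⁻¹`. Upper bound:
freezing one block of variables of a polynomial `P` of degree `≤ n` leaves a polynomial of
degree `≤ n` in the other block, so the one-block inequality, applied in `w` and then in `u`,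
gives `(Λ_n^A(x) Λ_n^B(y))⁻¹ |P(x,y)|² ≤ ∫_A ∫_B P² = ‖P‖²_{L²(A×B)}`; now take `P` extremal
for `A × B`.
-/

open MeasureTheory MvPolynomial

namespace MvPolynomial

variable {σ τ R : Type*} [CommSemiring R]

theorem totalDegree_X_le (i : σ) : (X i : MvPolynomial σ R).totalDegree ≤ 1 :=
  (totalDegree_monomial_le _ _).trans (by simp)

theorem eval_aeval (g : σ → MvPolynomial τ R) (u : τ → R) (P : MvPolynomial σ R) :
    eval u (aeval g P) = eval (fun i => eval u (g i)) P := by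
  rw [aeval_eq_bind₁]
  exact eval₂Hom_bind₁ _ _ _ _

theorem totalDegree_aeval_le (g : σ → MvPolynomial τ R) (hg : ∀ i, (g i).totalDegree ≤ 1)
    (P : MvPolynomial σ R) : (aeval g P).totalDegree ≤ P.totalDegree := by
  rw [aeval_def, eval₂_eq]
  refine (totalDegree_finsetSum _ _).trans (Finset.sup_le fun d hd => ?_)
  calc (algebraMap R (MvPolynomial τ R) (coeff d P) * ∏ i ∈ d.support, g i ^ d i).totalDegree
      ≤ (∏ i ∈ d.support, g i ^ d i).totalDegree := by
        refine (totalDegree_mul _ _).trans ?_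
        rw [algebraMap_eq, totalDegree_C, zero_add]
    _ ≤ ∑ i ∈ d.support, (g i ^ d i).totalDegree := totalDegree_finsetProd _ _
    _ ≤ ∑ i ∈ d.support, d i := Finset.sum_le_sum fun i _ =>
        (totalDegree_pow _ _).trans (by simpa using Nat.mul_le_mul_left (d i) (hg i))
    _ ≤ P.totalDegree := le_totalDegree hd

variable {k l : ℕ}

theorem eval_append_rename_mul_rename (p : MvPolynomial (Fin k) R) (q : MvPolynomial (Fin l) R)
    (u : Fin k → R) (w : Fin l → R) :
    eval (Fin.append u w) (rename (Fin.castAdd l) p * rename (Fin.natAdd k) q) =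
      eval u p * eval w q := by
  rw [eval_mul, eval_rename, eval_rename]
  congr 3 <;> funext j <;> simp

theorem exists_totalDegree_le_eval_eq_eval_append_left (P : MvPolynomial (Fin (k + l)) R)
    (w : Fin l → R) : ∃ Q : MvPolynomial (Fin k) R, Q.totalDegree ≤ P.totalDegree ∧
      ∀ u, eval u Q = eval (Fin.append u w) P := by
  refine ⟨aeval (Fin.append X (C ∘ w)) P, totalDegree_aeval_le _ (fun i => ?_) P,
    fun u => ?_⟩
  · refine Fin.addCases (fun j => ?_) (fun j => ?_) i <;> simp [totalDegree_X_le]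
  · rw [eval_aeval]
    congr 2
    funext i
    refine Fin.addCases (fun j => ?_) (fun j => ?_) i <;> simp

theorem exists_totalDegree_le_eval_eq_eval_append_right (P : MvPolynomial (Fin (k + l)) R)
    (u : Fin k → R) : ∃ Q : MvPolynomial (Fin l) R, Q.totalDegree ≤ P.totalDegree ∧
      ∀ w, eval w Q = eval (Fin.append u w) P := by
  refine ⟨aeval (Fin.append (C ∘ u) X) P, totalDegree_aeval_le _ (fun i => ?_) P,
    fun w => ?_⟩
  · refine Fin.addCases (fun j => ?_) (fun j => ?_) i <;> simp [totalDegree_X_le]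
  · rw [eval_aeval]
    congr 2
    funext i
    refine Fin.addCases (fun j => ?_) (fun j => ?_) i <;> simp

end MvPolynomial

theorem measurePreserving_finAppend (k l : ℕ) :
    MeasurePreserving (fun p : (Fin k → ℝ) × (Fin l → ℝ) => Fin.append p.1 p.2) := by
  convert (volume_measurePreserving_piCongrLeft (fun _ => ℝ) finSumFinEquiv).comp
    (volume_measurePreserving_sumPiEquivProdPi_symm (fun _ : Fin k ⊕ Fin l => ℝ)) using 1 <;>
    try rfl
  funext ⟨u, w⟩ i
  simp only [Function.comp_apply, MeasurableEquiv.coe_piCongrLeft,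
    MeasurableEquiv.coe_sumPiEquivProdPi_symm]
  obtain ⟨s | s, rfl⟩ := finSumFinEquiv.surjective i
  · rw [Equiv.piCongrLeft_sumInl (fun _ : Fin (k + l) => ℝ) finSumFinEquiv u w s]; simp
  · rw [Equiv.piCongrLeft_sumInr (fun _ : Fin (k + l) => ℝ) finSumFinEquiv u w s]; simp

theorem setIntegral_finAppend {k l : ℕ} (A : Set (Fin k → ℝ)) (B : Set (Fin l → ℝ))
    (f : (Fin (k + l) → ℝ) → ℝ) :
    ∫ z in {z : Fin (k + l) → ℝ | ∃ u ∈ A, ∃ w ∈ B, z = Fin.append u w}, f z =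
      ∫ p in A ×ˢ B, f (Fin.append p.1 p.2) := by
  have himage : {z : Fin (k + l) → ℝ | ∃ u ∈ A, ∃ w ∈ B, z = Fin.append u w} =
      (fun p : (Fin k → ℝ) × (Fin l → ℝ) => Fin.append p.1 p.2) '' A ×ˢ B := by
    ext z
    simp [eq_comm]
  rw [himage, (measurePreserving_finAppend k l).setIntegral_image_emb
    (Fin.appendHomeomorph k l).measurableEmbedding]

theorem Continuous.integrableOn_of_isBounded {X E : Type*} [PseudoMetricSpace X]
    [ProperSpace X] [MeasurableSpace X] [OpensMeasurableSpace X] {μ : Measure X}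
    [IsFiniteMeasureOnCompacts μ] [NormedAddCommGroup E] {f : X → E} (hf : Continuous f)
    {s : Set X} (hs : Bornology.IsBounded s) :
    IntegrableOn f s μ :=
  (hf.continuousOn.integrableOn_compact' hs.isCompact_closure measurableSet_closure).mono_set
    subset_closure

theorem Real.rpow_neg_half_eq_sqrt_inv {c : ℝ} (hc : 0 ≤ c) : c ^ (-(1 : ℝ) / 2) = √c⁻¹ := by
  rw [neg_div, Real.rpow_neg hc, Real.sqrt_inv, Real.sqrt_eq_rpow]

section Christoffel

variable {σ : Type*}

/-- `IsLeast (normalizedL2Norms μ N z) (c ^ (-1/2))` says that `c = C(𝒫_N, μ, z)`. -/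
noncomputable def normalizedL2Norms (μ : Measure (σ → ℝ)) (N : ℕ) (z : σ → ℝ) : Set ℝ :=
  {t | ∃ P : MvPolynomial σ ℝ, P.totalDegree ≤ N ∧ |eval z P| = 1 ∧
    t = (∫ u, (eval u P) ^ 2 ∂μ) ^ ((1 : ℝ) / 2)}

variable {μ : Measure (σ → ℝ)} {N : ℕ} {z : σ → ℝ} {c : ℝ}

theorem exists_integral_eq_inv_of_isLeast_normalizedL2Norms (hc : 0 ≤ c)
    (h : IsLeast (normalizedL2Norms μ N z) (c ^ (-(1 : ℝ) / 2))) :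
    ∃ P : MvPolynomial σ ℝ, P.totalDegree ≤ N ∧ |eval z P| = 1 ∧
      ∫ u, (eval u P) ^ 2 ∂μ = c⁻¹ := by
  obtain ⟨P, hdeg, hval, hnorm⟩ := h.1
  refine ⟨P, hdeg, hval, ?_⟩
  rwa [Real.rpow_neg_half_eq_sqrt_inv hc, ← Real.sqrt_eq_rpow,
    Real.sqrt_inj (inv_nonneg.2 hc) (integral_nonneg fun _ => sq_nonneg _), eq_comm] at hnorm

theorem inv_mul_sq_eval_le_integral_of_isLeast_normalizedL2Norms (hc : 0 ≤ c)
    (h : IsLeast (normalizedL2Norms μ N z) (c ^ (-(1 : ℝ) / 2)))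
    {Q : MvPolynomial σ ℝ} (hQ : Q.totalDegree ≤ N) :
    c⁻¹ * (eval z Q) ^ 2 ≤ ∫ u, (eval u Q) ^ 2 ∂μ := by
  have hint : 0 ≤ ∫ u, (eval u Q) ^ 2 ∂μ := integral_nonneg fun _ => sq_nonneg _
  rcases eq_or_ne (eval z Q) 0 with hzero | hzero
  · simpa [hzero] using hint
  -- `Q / |Q(z)|` is a competitor
  have hmem : (∫ u, (eval u (C |eval z Q|⁻¹ * Q)) ^ 2 ∂μ) ^ ((1 : ℝ) / 2) ∈
      normalizedL2Norms μ N z := by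
    refine ⟨C |eval z Q|⁻¹ * Q, ?_, ?_, rfl⟩
    · exact (totalDegree_mul _ _).trans (by simpa [totalDegree_C] using hQ)
    · rw [eval_mul, eval_C, abs_mul, abs_inv, abs_abs, inv_mul_cancel₀ (abs_ne_zero.2 hzero)]
  have hle := h.2 hmem
  simp_rw [eval_mul, eval_C, mul_pow, inv_pow, sq_abs, integral_const_mul] at hle
  rw [Real.rpow_neg_half_eq_sqrt_inv hc, ← Real.sqrt_eq_rpow,
    Real.sqrt_le_sqrt_iff (mul_nonneg (inv_nonneg.2 (sq_nonneg _)) hint), inv_mul_eq_div,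
    le_div_iff₀ (pow_pos (abs_pos.2 hzero) 2 |>.trans_eq (sq_abs _))] at hle
  exact hle

end Christoffel

section Product

variable {k l : ℕ} {A : Set (Fin k → ℝ)} {B : Set (Fin l → ℝ)} {x : Fin k → ℝ}
  {y : Fin l → ℝ} {a b m : ℝ}

theorem mul_le_of_isLeast_normalizedL2Norms_finAppend {N₁ N₂ N : ℕ} (hN : N₁ + N₂ ≤ N)
    (ha : 0 < a) (hb : 0 < b) (hm : 0 < m)
    (hA : IsLeast (normalizedL2Norms (volume.restrict A) N₁ x) (a ^ (-(1 : ℝ) / 2)))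
    (hB : IsLeast (normalizedL2Norms (volume.restrict B) N₂ y) (b ^ (-(1 : ℝ) / 2)))
    (hAB : IsLeast (normalizedL2Norms
      (volume.restrict {z | ∃ u ∈ A, ∃ w ∈ B, z = Fin.append u w}) N (Fin.append x y))
      (m ^ (-(1 : ℝ) / 2))) :
    a * b ≤ m := by
  obtain ⟨p, hpdeg, hpx, hp⟩ := exists_integral_eq_inv_of_isLeast_normalizedL2Norms ha.le hA
  obtain ⟨q, hqdeg, hqy, hq⟩ := exists_integral_eq_inv_of_isLeast_normalizedL2Norms hb.le hB
  have hdeg : (rename (Fin.castAdd l) p * rename (Fin.natAdd k) q).totalDegree ≤ N := by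
    have := totalDegree_mul (rename (Fin.castAdd l) p) (rename (Fin.natAdd k) q)
    have := totalDegree_rename_le (Fin.castAdd l) p
    have := totalDegree_rename_le (Fin.natAdd k) q
    omega
  have hle := inv_mul_sq_eval_le_integral_of_isLeast_normalizedL2Norms hm.le hAB hdeg
  rw [setIntegral_finAppend A B fun z => _] at hle
  simp_rw [eval_append_rename_mul_rename, mul_pow] at hle
  rw [← sq_abs (eval x p), hpx, ← sq_abs (eval y q), hqy, Measure.volume_eq_prod,
    setIntegral_prod_mul (fun u => eval u p ^ 2) (fun w => eval w q ^ 2), hp, hq, one_pow,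
    mul_one, mul_one, ← mul_inv] at hle
  exact (inv_le_inv₀ hm (mul_pos ha hb)).1 hle

theorem inv_mul_inv_mul_sq_eval_append_le_setIntegral (hAbd : Bornology.IsBounded A)
    (hBbd : Bornology.IsBounded B) {N : ℕ} (ha : 0 ≤ a) (hb : 0 ≤ b)
    (hA : IsLeast (normalizedL2Norms (volume.restrict A) N x) (a ^ (-(1 : ℝ) / 2)))
    (hB : IsLeast (normalizedL2Norms (volume.restrict B) N y) (b ^ (-(1 : ℝ) / 2)))
    {P : MvPolynomial (Fin (k + l)) ℝ} (hP : P.totalDegree ≤ N) :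
    a⁻¹ * b⁻¹ * eval (Fin.append x y) P ^ 2 ≤
      ∫ p in A ×ˢ B, eval (Fin.append p.1 p.2) P ^ 2 := by
  obtain ⟨Q, hQdeg, hQ⟩ := exists_totalDegree_le_eval_eq_eval_append_left P y
  have hslice (u : Fin k → ℝ) :
      b⁻¹ * eval (Fin.append u y) P ^ 2 ≤ ∫ w in B, eval (Fin.append u w) P ^ 2 := by
    obtain ⟨Qu, hQudeg, hQu⟩ := exists_totalDegree_le_eval_eq_eval_append_right P u
    simpa only [hQu] using
      inv_mul_sq_eval_le_integral_of_isLeast_normalizedL2Norms hb hB (hQudeg.trans hP)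
  have hcont :
      Continuous fun p : (Fin k → ℝ) × (Fin l → ℝ) => eval (Fin.append p.1 p.2) P ^ 2 :=
    ((continuous_eval P).comp (Fin.appendHomeomorph k l).continuous).pow 2
  have hint : Integrable (fun p : (Fin k → ℝ) × (Fin l → ℝ) =>
      eval (Fin.append p.1 p.2) P ^ 2) ((volume.restrict A).prod (volume.restrict B)) := by
    rw [Measure.prod_restrict]
    exact hcont.integrableOn_of_isBounded (hAbd.prod hBbd)
  have hslice_int : IntegrableOn (fun u => b⁻¹ * eval (Fin.append u y) P ^ 2) A :=
    (continuous_const.mul (hcont.comp (continuous_id.prodMk continuous_const))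
      ).integrableOn_of_isBounded hAbd
  calc a⁻¹ * b⁻¹ * eval (Fin.append x y) P ^ 2 = b⁻¹ * (a⁻¹ * eval x Q ^ 2) := by
        rw [hQ]; ring
    _ ≤ b⁻¹ * ∫ u in A, eval u Q ^ 2 := mul_le_mul_of_nonneg_left
        (inv_mul_sq_eval_le_integral_of_isLeast_normalizedL2Norms ha hA (hQdeg.trans hP))
        (inv_nonneg.2 hb)
    _ = ∫ u in A, b⁻¹ * eval (Fin.append u y) P ^ 2 := by
        simp_rw [← hQ]; exact (integral_const_mul _ _).symm
    _ ≤ ∫ u in A, ∫ w in B, eval (Fin.append u w) P ^ 2 :=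
        integral_mono hslice_int hint.integral_prod_left hslice
    _ = ∫ p in A ×ˢ B, eval (Fin.append p.1 p.2) P ^ 2 := by
        rw [Measure.volume_eq_prod, ← Measure.prod_restrict, integral_prod _ hint]

theorem le_mul_of_isLeast_normalizedL2Norms_finAppend (hAbd : Bornology.IsBounded A)
    (hBbd : Bornology.IsBounded B) {N : ℕ} (ha : 0 < a) (hb : 0 < b) (hm : 0 < m)
    (hA : IsLeast (normalizedL2Norms (volume.restrict A) N x) (a ^ (-(1 : ℝ) / 2)))
    (hB : IsLeast (normalizedL2Norms (volume.restrict B) N y) (b ^ (-(1 : ℝ) / 2)))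
    (hAB : IsLeast (normalizedL2Norms
      (volume.restrict {z | ∃ u ∈ A, ∃ w ∈ B, z = Fin.append u w}) N (Fin.append x y))
      (m ^ (-(1 : ℝ) / 2))) :
    m ≤ a * b := by
  obtain ⟨P, hdeg, hval, hnorm⟩ := exists_integral_eq_inv_of_isLeast_normalizedL2Norms hm.le hAB
  have hle := inv_mul_inv_mul_sq_eval_append_le_setIntegral hAbd hBbd ha.le hb.le hA hB hdeg
  rw [← sq_abs, hval, one_pow, mul_one, ← mul_inv,
    ← setIntegral_finAppend A B fun z => eval z P ^ 2, hnorm] at hle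
  exact (inv_le_inv₀ (mul_pos ha hb) hm).1 hle

end Product

theorem stmt17_general (k l : ℕ) (A : Set (Fin k → ℝ)) (B : Set (Fin l → ℝ))
    (hAbd : Bornology.IsBounded A) (hBbd : Bornology.IsBounded B)
    (x : Fin k → ℝ) (y : Fin l → ℝ) (n : ℕ)
    (a a2 b b2 m : ℝ) (ha : 0 < a) (ha2 : 0 < a2) (hb : 0 < b) (hb2 : 0 < b2) (hm : 0 < m)
    (hA : IsLeast {t : ℝ | ∃ P : MvPolynomial (Fin k) ℝ, P.totalDegree ≤ n ∧
        |MvPolynomial.eval x P| = 1 ∧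
        t = (∫ z in A, (MvPolynomial.eval z P) ^ 2) ^ ((1 : ℝ) / 2)}
      (a ^ (-(1 : ℝ) / 2)))
    (hA2 : IsLeast {t : ℝ | ∃ P : MvPolynomial (Fin k) ℝ, P.totalDegree ≤ n / 2 ∧
        |MvPolynomial.eval x P| = 1 ∧
        t = (∫ z in A, (MvPolynomial.eval z P) ^ 2) ^ ((1 : ℝ) / 2)}
      (a2 ^ (-(1 : ℝ) / 2)))
    (hB : IsLeast {t : ℝ | ∃ P : MvPolynomial (Fin l) ℝ, P.totalDegree ≤ n ∧
        |MvPolynomial.eval y P| = 1 ∧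
        t = (∫ z in B, (MvPolynomial.eval z P) ^ 2) ^ ((1 : ℝ) / 2)}
      (b ^ (-(1 : ℝ) / 2)))
    (hB2 : IsLeast {t : ℝ | ∃ P : MvPolynomial (Fin l) ℝ, P.totalDegree ≤ n / 2 ∧
        |MvPolynomial.eval y P| = 1 ∧
        t = (∫ z in B, (MvPolynomial.eval z P) ^ 2) ^ ((1 : ℝ) / 2)}
      (b2 ^ (-(1 : ℝ) / 2)))
    (hAB : IsLeast {t : ℝ | ∃ P : MvPolynomial (Fin (k + l)) ℝ, P.totalDegree ≤ n ∧
        |MvPolynomial.eval (Fin.append x y) P| = 1 ∧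
        t = (∫ z in {z : Fin (k + l) → ℝ | ∃ u ∈ A, ∃ w ∈ B, z = Fin.append u w},
              (MvPolynomial.eval z P) ^ 2) ^ ((1 : ℝ) / 2)}
      (m ^ (-(1 : ℝ) / 2))) :
    a2 * b2 ≤ m ∧ m ≤ a * b :=
  ⟨mul_le_of_isLeast_normalizedL2Norms_finAppend (by omega) ha2 hb2 hm hA2 hB2 hAB,
    le_mul_of_isLeast_normalizedL2Norms_finAppend hAbd hBbd ha hb hm hA hB hAB⟩

/-- For bounded domains `A ⊂ ℝ^k`, `B ⊂ ℝ^l` of positive measure,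
`x ∈ A`, `y ∈ B` and `n ≥ 2`, the inverse Christoffel functions (for total-degree
polynomials, Lebesgue measure), characterized variationally by
`C(𝒫,D,z)^{-1/2} = min{‖f‖_{L²(D)} : f ∈ 𝒫, |f(z)| = 1}`, satisfy
`Λ_{⌊n/2⌋}^A(x) Λ_{⌊n/2⌋}^B(y) ≤ C(𝒫_{n,k+l}, A×B, (x,y)) ≤ Λ_n^A(x) Λ_n^B(y)`. -/
theorem stmt17 (k l : ℕ) (A : Set (Fin k → ℝ)) (B : Set (Fin l → ℝ))
    (hAbd : Bornology.IsBounded A) (hBbd : Bornology.IsBounded B)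
    (hAvol : 0 < volume A) (hBvol : 0 < volume B)
    (x : Fin k → ℝ) (hx : x ∈ A) (y : Fin l → ℝ) (hy : y ∈ B)
    (n : ℕ) (hn : 2 ≤ n)
    (a a2 b b2 m : ℝ) (ha : 0 < a) (ha2 : 0 < a2) (hb : 0 < b) (hb2 : 0 < b2) (hm : 0 < m)
    (hA : IsLeast {t : ℝ | ∃ P : MvPolynomial (Fin k) ℝ, P.totalDegree ≤ n ∧
        |MvPolynomial.eval x P| = 1 ∧
        t = (∫ z in A, (MvPolynomial.eval z P) ^ 2) ^ ((1 : ℝ) / 2)}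
      (a ^ (-(1 : ℝ) / 2)))
    (hA2 : IsLeast {t : ℝ | ∃ P : MvPolynomial (Fin k) ℝ, P.totalDegree ≤ n / 2 ∧
        |MvPolynomial.eval x P| = 1 ∧
        t = (∫ z in A, (MvPolynomial.eval z P) ^ 2) ^ ((1 : ℝ) / 2)}
      (a2 ^ (-(1 : ℝ) / 2)))
    (hB : IsLeast {t : ℝ | ∃ P : MvPolynomial (Fin l) ℝ, P.totalDegree ≤ n ∧
        |MvPolynomial.eval y P| = 1 ∧
        t = (∫ z in B, (MvPolynomial.eval z P) ^ 2) ^ ((1 : ℝ) / 2)}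
      (b ^ (-(1 : ℝ) / 2)))
    (hB2 : IsLeast {t : ℝ | ∃ P : MvPolynomial (Fin l) ℝ, P.totalDegree ≤ n / 2 ∧
        |MvPolynomial.eval y P| = 1 ∧
        t = (∫ z in B, (MvPolynomial.eval z P) ^ 2) ^ ((1 : ℝ) / 2)}
      (b2 ^ (-(1 : ℝ) / 2)))
    (hAB : IsLeast {t : ℝ | ∃ P : MvPolynomial (Fin (k + l)) ℝ, P.totalDegree ≤ n ∧
        |MvPolynomial.eval (Fin.append x y) P| = 1 ∧
        t = (∫ z in {z : Fin (k + l) → ℝ | ∃ u ∈ A, ∃ w ∈ B, z = Fin.append u w},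
              (MvPolynomial.eval z P) ^ 2) ^ ((1 : ℝ) / 2)}
      (m ^ (-(1 : ℝ) / 2))) :
    a2 * b2 ≤ m ∧ m ≤ a * b :=
  stmt17_general k l A B hAbd hBbd x y n a a2 b b2 m ha ha2 hb hb2 hm hA hA2 hB hB2 hAB
end
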